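/- arXiv:2603.16481 — 2 statements merged into one kernel-verified Lean document; each statement's English description precedes it below -/
import Mathlib

section
/- Let M ∈ ℝ^{n_f×r} be a test-point feature matrix and let σ ∈ ℝ^{n_con} have all σ_j > 0. Assume the posterior covariance matrix Σ_σ := M S_σ⁻¹ Mᵀ ∈ ℝ^{n_f×n_f} is positive definite. Then for every feasible θ ∈ ℝ^r, the prediction error lies in the ellipsoid (M θ − M θ^μ_σ)ᵀ Σ_σ⁻¹ (M θ − M θ^μ_σ) ≤ β_σ². (Finite-dimensional form of Corollary 1: distribution-free ellipsoidal uncertainty bound for multivariate kernel regression, valid for every σ.) -/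
/-!
Every feasible `θ` lies in the ellipsoid `(θ - θ^μ_σ)ᵀ S_σ (θ - θ^μ_σ) ≤ β_σ²`: completing the
square gives `(θ - θ^μ_σ)ᵀ S_σ (θ - θ^μ_σ) = ‖θ‖² + (y - Aᵀθ)ᵀ P_σ (y - Aᵀθ) - yᵀ K̂_σ⁻¹ y`, and
feasibility bounds the first two terms by `Γ_f²` and `∑ j Γ_{w,j}²/σ_j²`. The image of this
ellipsoid under `M` lies in the ellipsoid of `Σ_σ = M S_σ⁻¹ Mᵀ`, because the Schur complement
`S_σ - Mᵀ Σ_σ⁻¹ M` is positive semidefinite.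
-/

open Matrix

/-- Aggregated noise-shape matrix `P_σ := ∑ j σ_j⁻² P_j`. -/
noncomputable def Pagg {N n_con : ℕ} (P : Fin n_con → Matrix (Fin N) (Fin N) ℝ)
    (σ : Fin n_con → ℝ) : Matrix (Fin N) (Fin N) ℝ :=
  ∑ j, ((σ j) ^ 2)⁻¹ • P j

/-- Gram matrix `K̂_σ := AᵀA + P_σ⁻¹`. -/
noncomputable def Khat {r N n_con : ℕ} (A : Matrix (Fin r) (Fin N) ℝ)
    (P : Fin n_con → Matrix (Fin N) (Fin N) ℝ) (σ : Fin n_con → ℝ) :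
    Matrix (Fin N) (Fin N) ℝ :=
  Aᵀ * A + (Pagg P σ)⁻¹

/-- Posterior-mean coefficient vector `θ^μ_σ := A K̂_σ⁻¹ y`. -/
noncomputable def θmean {r N n_con : ℕ} (A : Matrix (Fin r) (Fin N) ℝ) (y : Fin N → ℝ)
    (P : Fin n_con → Matrix (Fin N) (Fin N) ℝ) (σ : Fin n_con → ℝ) : Fin r → ℝ :=
  A *ᵥ ((Khat A P σ)⁻¹ *ᵥ y)

/-- Shape matrix `S_σ := I_r + A P_σ Aᵀ`. -/
noncomputable def Smat {r N n_con : ℕ} (A : Matrix (Fin r) (Fin N) ℝ)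
    (P : Fin n_con → Matrix (Fin N) (Fin N) ℝ) (σ : Fin n_con → ℝ) :
    Matrix (Fin r) (Fin r) ℝ :=
  1 + A * Pagg P σ * Aᵀ

/-- Scaling factor `β_σ := √(Γ_f² + ∑ j Γ_{w,j}²/σ_j² − yᵀ K̂_σ⁻¹ y)`. -/
noncomputable def βfac {r N n_con : ℕ} (A : Matrix (Fin r) (Fin N) ℝ) (y : Fin N → ℝ)
    (Γf : ℝ) (Γw : Fin n_con → ℝ) (P : Fin n_con → Matrix (Fin N) (Fin N) ℝ)
    (σ : Fin n_con → ℝ) : ℝ :=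
  Real.sqrt (Γf ^ 2 + ∑ j, (Γw j) ^ 2 / (σ j) ^ 2 - y ⬝ᵥ ((Khat A P σ)⁻¹ *ᵥ y))

/-- The GP-type dual function `F(σ) := qᵀθ^μ_σ + β_σ √(qᵀ S_σ⁻¹ q)`. -/
noncomputable def dualF {r N n_con : ℕ} (A : Matrix (Fin r) (Fin N) ℝ) (y : Fin N → ℝ)
    (q : Fin r → ℝ) (Γf : ℝ) (Γw : Fin n_con → ℝ)
    (P : Fin n_con → Matrix (Fin N) (Fin N) ℝ) (σ : Fin n_con → ℝ) : ℝ :=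
  q ⬝ᵥ θmean A y P σ + βfac A y Γf Γw P σ * Real.sqrt (q ⬝ᵥ ((Smat A P σ)⁻¹ *ᵥ q))

namespace Matrix

lemma PosDef.isSymm {n : Type*} {S : Matrix n n ℝ} (hS : S.PosDef) : S.IsSymm :=
  isHermitian_iff_isSymm.1 hS.isHermitian

variable {ι m n : Type*} [Fintype m] [Fintype n]

lemma dotProduct_sum_smul_mulVec [Fintype ι] (c : ι → ℝ) (P : ι → Matrix n n ℝ) (x : n → ℝ) :
    x ⬝ᵥ (∑ i, c i • P i) *ᵥ x = ∑ i, c i * (x ⬝ᵥ P i *ᵥ x) := by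
  simp only [sum_mulVec, dotProduct_sum, smul_mulVec, dotProduct_smul, smul_eq_mul]

lemma posDef_sum_smul_of_posSemidef [Fintype ι] {c : ι → ℝ} (hc : ∀ i, 0 < c i)
    {P : ι → Matrix n n ℝ} (hP : ∀ i, (P i).PosSemidef) (hsum : (∑ i, P i).PosDef) :
    (∑ i, c i • P i).PosDef := by
  refine posDef_iff_dotProduct_mulVec.2
    ⟨(posSemidef_sum _ fun i _ => (hP i).smul (hc i).le).isHermitian, fun x hx => ?_⟩
  have hpos : 0 < ∑ i, x ⬝ᵥ P i *ᵥ x := by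
    simpa [sum_mulVec, dotProduct_sum] using hsum.dotProduct_mulVec_pos hx
  obtain ⟨i, -, hi⟩ := Finset.exists_lt_of_sum_lt (hpos.trans_eq' Finset.sum_const_zero.symm)
  have hnonneg : ∀ j, 0 ≤ x ⬝ᵥ P j *ᵥ x := fun j => by
    simpa using (hP j).dotProduct_mulVec_nonneg x
  rw [star_trivial, dotProduct_sum_smul_mulVec]
  exact Finset.sum_pos' (fun j _ => mul_nonneg (hc j).le (hnonneg j))
    ⟨i, Finset.mem_univ i, mul_pos (hc i) hi⟩

lemma IsSymm.dotProduct_mulVec_comm {S : Matrix n n ℝ} (hS : S.IsSymm) (u v : n → ℝ) :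
    u ⬝ᵥ S *ᵥ v = v ⬝ᵥ S *ᵥ u := by
  rw [← dotProduct_transpose_mulVec, hS.eq]

lemma IsSymm.sub_dotProduct_mulVec_sub {S : Matrix n n ℝ} (hS : S.IsSymm) (u v : n → ℝ) :
    (u - v) ⬝ᵥ S *ᵥ (u - v) = u ⬝ᵥ S *ᵥ u - 2 * (u ⬝ᵥ S *ᵥ v) + v ⬝ᵥ S *ᵥ v := by
  rw [mulVec_sub, dotProduct_sub, sub_dotProduct, sub_dotProduct, hS.dotProduct_mulVec_comm v u]
  ring

section SchurComplement

variable [DecidableEq m] [DecidableEq n]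

lemma PosDef.posSemidef_sub_transpose_mul_inv_mul {S : Matrix n n ℝ} (hS : S.PosDef)
    {M : Matrix m n ℝ} (hG : (M * S⁻¹ * Mᵀ).PosDef) :
    (S - Mᵀ * (M * S⁻¹ * Mᵀ)⁻¹ * M).PosSemidef := by
  have := hS.isUnit.invertible
  have := hG.isUnit.invertible
  -- The block matrix has Schur complement `0` with respect to `S`, hence is positive semidefinite.
  have hblock : (fromBlocks (M * S⁻¹ * Mᵀ) M Mᴴ S).PosSemidef := by
    rw [PosDef.fromBlocks₂₂ _ _ hS, conjTranspose_eq_transpose_of_trivial, sub_self]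
    exact .zero
  rwa [PosDef.fromBlocks₁₁ _ _ hG, conjTranspose_eq_transpose_of_trivial] at hblock

lemma PosDef.mulVec_dotProduct_inv_mulVec_le {S : Matrix n n ℝ} (hS : S.PosDef)
    {M : Matrix m n ℝ} (hG : (M * S⁻¹ * Mᵀ).PosDef) (e : n → ℝ) :
    (M *ᵥ e) ⬝ᵥ (M * S⁻¹ * Mᵀ)⁻¹ *ᵥ (M *ᵥ e) ≤ e ⬝ᵥ S *ᵥ e := by
  have := (hS.posSemidef_sub_transpose_mul_inv_mul hG).dotProduct_mulVec_nonneg e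
  rwa [star_trivial, sub_mulVec, dotProduct_sub, sub_nonneg, ← mulVec_mulVec, ← mulVec_mulVec,
    dotProduct_transpose_mulVec, dotProduct_comm] at this

end SchurComplement

variable (A : Matrix m n ℝ) {P : Matrix n n ℝ}

lemma posDef_one_add_mul_mul_transpose [DecidableEq m] (hP : P.PosSemidef) :
    (1 + A * P * Aᵀ).PosDef := by
  simpa [conjTranspose_eq_transpose_of_trivial] using
    PosDef.one.add_posSemidef (hP.mul_mul_conjTranspose_same A)

lemma posDef_transpose_mul_self_add_inv [DecidableEq n] (hP : P.PosDef) :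
    (Aᵀ * A + P⁻¹).PosDef := by
  simpa [conjTranspose_eq_transpose_of_trivial] using
    PosDef.posSemidef_add (posSemidef_conjTranspose_mul_self A) hP.inv

lemma mulVec_mulVec_inv_dotProduct_mulVec_mulVec [DecidableEq n] (hP : P.PosDef) (y : n → ℝ) :
    (A *ᵥ ((Aᵀ * A + P⁻¹)⁻¹ *ᵥ y)) ⬝ᵥ A *ᵥ (P *ᵥ y)
      = y ⬝ᵥ P *ᵥ y - y ⬝ᵥ (Aᵀ * A + P⁻¹)⁻¹ *ᵥ y := by
  set K := Aᵀ * A + P⁻¹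
  have hK := posDef_transpose_mul_self_add_inv A hP
  have hKP : K * P = Aᵀ * A * P + 1 := by
    rw [Matrix.add_mul, nonsing_inv_mul _ ((isUnit_iff_isUnit_det P).1 hP.isUnit)]
  have hgram : Aᵀ *ᵥ (A *ᵥ (P *ᵥ y)) = K *ᵥ (P *ᵥ y) - y := by
    rw [mulVec_mulVec y K P, hKP, add_mulVec, one_mulVec, add_sub_cancel_right]
    simp only [mulVec_mulVec, Matrix.mul_assoc]
  rw [dotProduct_comm, ← dotProduct_transpose_mulVec, hgram, dotProduct_sub,
    hK.isSymm.dotProduct_mulVec_comm, mulVec_mulVec,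
    mul_nonsing_inv _ ((isUnit_iff_isUnit_det K).1 hK.isUnit), one_mulVec, dotProduct_comm,
    dotProduct_comm _ y]

variable [DecidableEq m] [DecidableEq n]

lemma one_add_mul_mul_transpose_mul (hP : IsUnit P) :
    (1 + A * P * Aᵀ) * A = A * P * (Aᵀ * A + P⁻¹) := by
  rw [Matrix.mul_add, Matrix.mul_assoc A P P⁻¹, mul_nonsing_inv _ ((isUnit_iff_isUnit_det P).1 hP),
    Matrix.add_mul, Matrix.one_mul, Matrix.mul_one, add_comm, ← Matrix.mul_assoc]

lemma one_add_mul_mul_transpose_mulVec_mulVec_inv (hP : P.PosDef) (y : n → ℝ) :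
    (1 + A * P * Aᵀ) *ᵥ (A *ᵥ ((Aᵀ * A + P⁻¹)⁻¹ *ᵥ y)) = A *ᵥ (P *ᵥ y) := by
  have hK := (posDef_transpose_mul_self_add_inv A hP).isUnit
  rw [mulVec_mulVec, mulVec_mulVec, one_add_mul_mul_transpose_mul A hP.isUnit, Matrix.mul_assoc,
    mul_nonsing_inv _ ((isUnit_iff_isUnit_det _).1 hK), Matrix.mul_one, mulVec_mulVec]

lemma sub_mulVec_mulVec_inv_dotProduct_one_add_mulVec (hP : P.PosDef) (y : n → ℝ) (θ : m → ℝ) :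
    (θ - A *ᵥ ((Aᵀ * A + P⁻¹)⁻¹ *ᵥ y)) ⬝ᵥ (1 + A * P * Aᵀ) *ᵥ (θ - A *ᵥ ((Aᵀ * A + P⁻¹)⁻¹ *ᵥ y))
      = θ ⬝ᵥ θ + (y - Aᵀ *ᵥ θ) ⬝ᵥ P *ᵥ (y - Aᵀ *ᵥ θ) - y ⬝ᵥ (Aᵀ * A + P⁻¹)⁻¹ *ᵥ y := by
  have hS : θ ⬝ᵥ (1 + A * P * Aᵀ) *ᵥ θ = θ ⬝ᵥ θ + (Aᵀ *ᵥ θ) ⬝ᵥ P *ᵥ (Aᵀ *ᵥ θ) := by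
    rw [add_mulVec, one_mulVec, dotProduct_add, ← mulVec_mulVec, ← mulVec_mulVec,
      dotProduct_mulVec, ← mulVec_transpose]
  rw [(posDef_one_add_mul_mul_transpose A hP.posSemidef).isSymm.sub_dotProduct_mulVec_sub,
    one_add_mul_mul_transpose_mulVec_mulVec_inv A hP,
    mulVec_mulVec_inv_dotProduct_mulVec_mulVec A hP, hS, hP.isSymm.sub_dotProduct_mulVec_sub,
    hP.isSymm.dotProduct_mulVec_comm y (Aᵀ *ᵥ θ),
    dotProduct_mulVec θ A, ← mulVec_transpose]
  ring

end Matrix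

theorem ellipsoidal_bound_multivariate_general
    (r N n_f n_con : ℕ)
    (A : Matrix (Fin r) (Fin N) ℝ) (y : Fin N → ℝ)
    (Γf : ℝ)
    (Γw : Fin n_con → ℝ)
    (P : Fin n_con → Matrix (Fin N) (Fin N) ℝ)
    (hP : ∀ j, (P j).PosSemidef)
    (hPsum : (∑ j, P j).PosDef)
    (M : Matrix (Fin n_f) (Fin r) ℝ)
    (σ : Fin n_con → ℝ) (hσ : ∀ j, 0 < σ j)
    (hSig : (M * (Smat A P σ)⁻¹ * Mᵀ).PosDef)
    (θ : Fin r → ℝ)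
    (hθf : θ ⬝ᵥ θ ≤ Γf ^ 2)
    (hθw : ∀ j, (y - Aᵀ *ᵥ θ) ⬝ᵥ (P j *ᵥ (y - Aᵀ *ᵥ θ)) ≤ (Γw j) ^ 2) :
    (M *ᵥ θ - M *ᵥ θmean A y P σ) ⬝ᵥ
        ((M * (Smat A P σ)⁻¹ * Mᵀ)⁻¹ *ᵥ (M *ᵥ θ - M *ᵥ θmean A y P σ))
      ≤ (βfac A y Γf Γw P σ) ^ 2 := by
  have hweight : ∀ j, 0 < ((σ j) ^ 2)⁻¹ := fun j => inv_pos.2 (pow_pos (hσ j) 2)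
  have hPσ : (Pagg P σ).PosDef := posDef_sum_smul_of_posSemidef hweight hP hPsum
  have hS : (Smat A P σ).PosDef := posDef_one_add_mul_mul_transpose A hPσ.posSemidef
  have hresidual : (y - Aᵀ *ᵥ θ) ⬝ᵥ Pagg P σ *ᵥ (y - Aᵀ *ᵥ θ) ≤ ∑ j, Γw j ^ 2 / σ j ^ 2 := by
    rw [Pagg, dotProduct_sum_smul_mulVec]
    refine Finset.sum_le_sum fun j _ => ?_
    rw [div_eq_inv_mul]
    exact mul_le_mul_of_nonneg_left (hθw j) (hweight j).le
  have hellipsoid : (θ - θmean A y P σ) ⬝ᵥ Smat A P σ *ᵥ (θ - θmean A y P σ)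
      ≤ Γf ^ 2 + ∑ j, Γw j ^ 2 / σ j ^ 2 - y ⬝ᵥ (Khat A P σ)⁻¹ *ᵥ y := by
    rw [Smat, θmean, Khat, sub_mulVec_mulVec_inv_dotProduct_one_add_mulVec A hPσ]
    linarith
  have hnonneg : 0 ≤ (θ - θmean A y P σ) ⬝ᵥ Smat A P σ *ᵥ (θ - θmean A y P σ) := by
    simpa using hS.posSemidef.dotProduct_mulVec_nonneg (θ - θmean A y P σ)
  rw [← mulVec_sub, βfac, Real.sq_sqrt (hnonneg.trans hellipsoid)]
  exact (hS.mulVec_dotProduct_inv_mulVec_le hSig _).trans hellipsoid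

/-- Corollary 1 (finite-dimensional form): distribution-free ellipsoidal uncertainty bound
for the multivariate prediction `Mθ`, valid for every positive noise-parameter vector `σ`. -/
theorem ellipsoidal_bound_multivariate
    (r N n_f n_con : ℕ) (hn : 1 ≤ n_con)
    (A : Matrix (Fin r) (Fin N) ℝ) (y : Fin N → ℝ)
    (Γf : ℝ) (hΓf : 0 < Γf)
    (Γw : Fin n_con → ℝ) (hΓw : ∀ j, 0 < Γw j)
    (P : Fin n_con → Matrix (Fin N) (Fin N) ℝ)
    (hP : ∀ j, (P j).PosSemidef)
    (hPsum : (∑ j, P j).PosDef)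
    (M : Matrix (Fin n_f) (Fin r) ℝ)
    (σ : Fin n_con → ℝ) (hσ : ∀ j, 0 < σ j)
    (hSig : (M * (Smat A P σ)⁻¹ * Mᵀ).PosDef)
    (θ : Fin r → ℝ)
    (hθf : θ ⬝ᵥ θ ≤ Γf ^ 2)
    (hθw : ∀ j, (y - Aᵀ *ᵥ θ) ⬝ᵥ (P j *ᵥ (y - Aᵀ *ᵥ θ)) ≤ (Γw j) ^ 2) :
    (M *ᵥ θ - M *ᵥ θmean A y P σ) ⬝ᵥ
        ((M * (Smat A P σ)⁻¹ * Mᵀ)⁻¹ *ᵥ (M *ᵥ θ - M *ᵥ θmean A y P σ))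
      ≤ (βfac A y Γf Γw P σ) ^ 2 :=
  ellipsoidal_bound_multivariate_general r N n_f n_con A y Γf Γw P hP hPsum M σ hσ hSig θ hθf hθw
end

section
/- Uniqueness of the worst-case function: in the setting of the closed-form relaxed problem, with P positive definite, q ≠ 0 and Γ² ≥ yᵀ K̂⁻¹ y, if θ ∈ ℝ^r satisfies the constraint ‖θ‖² + (y − Aᵀθ)ᵀ P (y − Aᵀθ) ≤ Γ² and achieves the optimal value qᵀθ = qᵀθ^μ + √(Γ² − yᵀ K̂⁻¹ y) · √(qᵀ S⁻¹ q), then θ = θ* := θ^μ + (√(Γ² − yᵀ K̂⁻¹ y)/√(qᵀ S⁻¹ q)) · S⁻¹ q; that is, the maximizer is unique. -/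
/-!
Completing the square (with `K̂ v = y`, `θ^μ = A v`) turns the constraint into
`(θ - θ^μ)ᵀ S (θ - θ^μ) ≤ d := Γ² - yᵀ K̂⁻¹ y`. In the inner product defined by `S`, Cauchy–Schwarz
bounds `qᵀ(θ - θ^μ) = ⟪θ - θ^μ, S⁻¹q⟫_S` by `√d √(qᵀS⁻¹q)`; at equality, the `S`-norm of
`θ - θ^μ - c S⁻¹q` with `c = √d / √(qᵀS⁻¹q)` expands to `(θ - θ^μ)ᵀ S (θ - θ^μ) - d ≤ 0`,
so it vanishes.
-/
open Matrix

variable {m n : Type*} [Fintype m] [Fintype n]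

theorem Matrix.IsSymm.dotProduct_mulVec_comm_s11 {α : Type*} [CommSemiring α] {M : Matrix n n α}
    (hM : M.IsSymm) (x y : n → α) : x ⬝ᵥ (M *ᵥ y) = y ⬝ᵥ (M *ᵥ x) := by
  rw [dotProduct_mulVec, ← mulVec_transpose, hM.eq, dotProduct_comm]

theorem dotProduct_self_add_residual_eq_completeSquare [DecidableEq m] [DecidableEq n]
    {P : Matrix n n ℝ} (hP : P.IsSymm) (hPdet : IsUnit P.det) (A : Matrix m n ℝ)
    {y v : n → ℝ} (hv : (Aᵀ * A + P⁻¹) *ᵥ v = y) (θ : m → ℝ) :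
    θ ⬝ᵥ θ + (y - Aᵀ *ᵥ θ) ⬝ᵥ (P *ᵥ (y - Aᵀ *ᵥ θ))
      = (θ - A *ᵥ v) ⬝ᵥ ((1 + A * P * Aᵀ) *ᵥ (θ - A *ᵥ v)) + y ⬝ᵥ v := by
  obtain ⟨z, rfl⟩ : ∃ z, θ = A *ᵥ v + z := ⟨θ - A *ᵥ v, by abel⟩
  obtain ⟨e, he_def⟩ : ∃ e, e = y - Aᵀ *ᵥ (A *ᵥ v) := ⟨_, rfl⟩
  -- `e = y - Aᵀθ^μ` is `P⁻¹ v`, which makes the cross terms in `z` cancel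
  have he : P *ᵥ e = v := by
    rw [show e = P⁻¹ *ᵥ v by rw [he_def, ← hv, add_mulVec, ← mulVec_mulVec]; abel,
      mulVec_mulVec, mul_nonsing_inv P hPdet, one_mulVec]
  have hres : y - Aᵀ *ᵥ (A *ᵥ v + z) = e - Aᵀ *ᵥ z := by rw [he_def, mulVec_add]; abel
  have hSz : z ⬝ᵥ ((1 + A * P * Aᵀ) *ᵥ z) = z ⬝ᵥ z + (Aᵀ *ᵥ z) ⬝ᵥ (P *ᵥ (Aᵀ *ᵥ z)) := by
    rw [add_mulVec, one_mulVec, dotProduct_add, ← mulVec_mulVec, ← mulVec_mulVec,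
      ← dotProduct_transpose_mulVec, dotProduct_comm (P *ᵥ _)]
  have hyv : y ⬝ᵥ v = (A *ᵥ v) ⬝ᵥ (A *ᵥ v) + e ⬝ᵥ v := by
    rw [← dotProduct_transpose_mulVec, dotProduct_comm v, ← add_dotProduct, he_def]
    abel_nf
  rw [add_sub_cancel_left, hres, hSz, hyv, ← he]
  simp only [dotProduct_add, add_dotProduct, mulVec_sub, dotProduct_sub, sub_dotProduct,
    hP.dotProduct_mulVec_comm_s11 e, he, dotProduct_comm _ v, dotProduct_transpose_mulVec,
    dotProduct_comm z]
  ring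

theorem Matrix.PosDef.eq_smul_inv_mulVec_of_dotProduct_eq [DecidableEq m] {S : Matrix m m ℝ}
    (hS : S.PosDef) {q z : m → ℝ} (hq : q ≠ 0) {d : ℝ} (hz : z ⬝ᵥ (S *ᵥ z) ≤ d)
    (hqz : q ⬝ᵥ z = √d * √(q ⬝ᵥ (S⁻¹ *ᵥ q))) :
    z = (√d / √(q ⬝ᵥ (S⁻¹ *ᵥ q))) • (S⁻¹ *ᵥ q) := by
  set w := S⁻¹ *ᵥ q
  set α := q ⬝ᵥ w
  have hSw : S *ᵥ w = q := by
    rw [mulVec_mulVec, mul_nonsing_inv S ((isUnit_iff_isUnit_det S).mp hS.isUnit), one_mulVec]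
  have hα : 0 < α := by
    have hw : w ≠ 0 := by rintro h; rw [h, mulVec_zero] at hSw; exact hq hSw.symm
    simpa [α, ← hSw, dotProduct_comm q] using hS.dotProduct_mulVec_pos hw
  have hd : 0 ≤ d :=
    (by simpa using hS.posSemidef.dotProduct_mulVec_nonneg z : (0 : ℝ) ≤ _).trans hz
  have hSsymm : S.IsSymm := isHermitian_iff_isSymm.mp hS.isHermitian
  set c := √d / √α with hc
  have hcross : c * (w ⬝ᵥ (S *ᵥ z)) = d := by
    rw [hSsymm.dotProduct_mulVec_comm_s11, hSw, dotProduct_comm, hqz, hc]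
    field_simp
    exact Real.sq_sqrt hd
  have hsq : c ^ 2 * (w ⬝ᵥ (S *ᵥ w)) = d := by
    rw [hSw, dotProduct_comm, hc, div_pow, Real.sq_sqrt hd, Real.sq_sqrt hα.le]
    exact div_mul_cancel₀ d hα.ne'
  have hexpand : (z - c • w) ⬝ᵥ (S *ᵥ (z - c • w))
      = z ⬝ᵥ (S *ᵥ z) - 2 * c * (w ⬝ᵥ (S *ᵥ z)) + c ^ 2 * (w ⬝ᵥ (S *ᵥ w)) := by
    simp only [mulVec_sub, mulVec_smul, dotProduct_sub, sub_dotProduct, dotProduct_smul,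
      smul_dotProduct, smul_eq_mul, hSsymm.dotProduct_mulVec_comm_s11 z w]
    ring
  refine sub_eq_zero.mp ?_
  by_contra hne
  have := hS.dotProduct_mulVec_pos hne
  simp only [star_trivial, hexpand] at this
  linarith

theorem relaxed_problem_unique_maximizer_general
    (r N : ℕ)
    (P : Matrix (Fin N) (Fin N) ℝ) (hP : P.PosDef)
    (A : Matrix (Fin r) (Fin N) ℝ) (y : Fin N → ℝ)
    (q : Fin r → ℝ) (hq : q ≠ 0)
    (Γ : ℝ)
    (Khat : Matrix (Fin N) (Fin N) ℝ) (hKhat : Khat = Aᵀ * A + P⁻¹)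
    (θμ : Fin r → ℝ) (hθμ : θμ = A *ᵥ (Khat⁻¹ *ᵥ y))
    (S : Matrix (Fin r) (Fin r) ℝ) (hS : S = 1 + A * P * Aᵀ)
    (θ : Fin r → ℝ)
    (hfeas : θ ⬝ᵥ θ + (y - Aᵀ *ᵥ θ) ⬝ᵥ (P *ᵥ (y - Aᵀ *ᵥ θ)) ≤ Γ ^ 2)
    (hopt : q ⬝ᵥ θ
      = q ⬝ᵥ θμ + Real.sqrt (Γ ^ 2 - y ⬝ᵥ (Khat⁻¹ *ᵥ y)) * Real.sqrt (q ⬝ᵥ (S⁻¹ *ᵥ q))) :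
    θ = θμ + (Real.sqrt (Γ ^ 2 - y ⬝ᵥ (Khat⁻¹ *ᵥ y))
        / Real.sqrt (q ⬝ᵥ (S⁻¹ *ᵥ q))) • (S⁻¹ *ᵥ q) := by
  have hKhat_pd : Khat.PosDef := hKhat ▸
    PosDef.posSemidef_add (by simpa using posSemidef_conjTranspose_mul_self A) hP.inv
  have hS_pd : S.PosDef := hS ▸
    PosDef.one.add_posSemidef (by simpa using hP.posSemidef.mul_mul_conjTranspose_same A)
  have hv : (Aᵀ * A + P⁻¹) *ᵥ (Khat⁻¹ *ᵥ y) = y := by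
    rw [← hKhat, mulVec_mulVec,
      mul_nonsing_inv _ ((isUnit_iff_isUnit_det _).mp hKhat_pd.isUnit), one_mulVec]
  rw [dotProduct_self_add_residual_eq_completeSquare (isHermitian_iff_isSymm.mp hP.isHermitian)
    ((isUnit_iff_isUnit_det _).mp hP.isUnit) A hv, ← hS, ← hθμ] at hfeas
  rw [← hS_pd.eq_smul_inv_mulVec_of_dotProduct_eq hq (le_sub_iff_add_le.mpr hfeas)
    (by rw [dotProduct_sub, hopt]; ring)]
  abel

/-- Uniqueness of the worst-case maximizer of the relaxed single-constraint problem: any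
feasible `θ` achieving the optimal value `qᵀθ^μ + √(Γ² − yᵀK̂⁻¹y) √(qᵀS⁻¹q)` equals
`θ* = θ^μ + (√(Γ² − yᵀK̂⁻¹y)/√(qᵀS⁻¹q)) S⁻¹ q`. -/
theorem relaxed_problem_unique_maximizer
    (r N : ℕ)
    (P : Matrix (Fin N) (Fin N) ℝ) (hP : P.PosDef)
    (A : Matrix (Fin r) (Fin N) ℝ) (y : Fin N → ℝ)
    (q : Fin r → ℝ) (hq : q ≠ 0)
    (Γ : ℝ) (hΓ : 0 < Γ)
    (Khat : Matrix (Fin N) (Fin N) ℝ) (hKhat : Khat = Aᵀ * A + P⁻¹)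
    (θμ : Fin r → ℝ) (hθμ : θμ = A *ᵥ (Khat⁻¹ *ᵥ y))
    (S : Matrix (Fin r) (Fin r) ℝ) (hS : S = 1 + A * P * Aᵀ)
    (hΓy : y ⬝ᵥ (Khat⁻¹ *ᵥ y) ≤ Γ ^ 2)
    (θ : Fin r → ℝ)
    (hfeas : θ ⬝ᵥ θ + (y - Aᵀ *ᵥ θ) ⬝ᵥ (P *ᵥ (y - Aᵀ *ᵥ θ)) ≤ Γ ^ 2)
    (hopt : q ⬝ᵥ θ
      = q ⬝ᵥ θμ + Real.sqrt (Γ ^ 2 - y ⬝ᵥ (Khat⁻¹ *ᵥ y)) * Real.sqrt (q ⬝ᵥ (S⁻¹ *ᵥ q))) :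
    θ = θμ + (Real.sqrt (Γ ^ 2 - y ⬝ᵥ (Khat⁻¹ *ᵥ y))
        / Real.sqrt (q ⬝ᵥ (S⁻¹ *ᵥ q))) • (S⁻¹ *ᵥ q) :=
  relaxed_problem_unique_maximizer_general r N P hP A y q hq Γ Khat hKhat θμ hθμ S hS θ hfeas hopt
end
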